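/- For every β ∈ B, S_β = O(n).(S_β ∩ W_β); that is, every μ ∈ S_β is of the form g.λ with g an orthogonal matrix and λ ∈ S_β ∩ W_β. -/

import Mathlib

open scoped BigOperators
open Matrix

noncomputable section

/-- An element of `V_n`, i.e. a bilinear map ℝⁿ×ℝⁿ→ℝⁿ, encoded by its structure
constants `μ i j k = ⟨μ(e_i,e_j), e_k⟩`. -/
abbrev Vn (n : ℕ) : Type := Fin n → Fin n → Fin n → ℝ

variable {n : ℕ}

/-- skew-symmetry, i.e. membership in `V_n` = Λ²(ℝⁿ)*⊗ℝⁿ. -/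
def IsSkew (μ : Vn n) : Prop := ∀ i j k, μ i j k = - μ j i k

/-- The bilinear map μ : ℝⁿ×ℝⁿ→ℝⁿ associated to the structure constants. -/
def brkt (μ : Vn n) (x y : Fin n → ℝ) : Fin n → ℝ := fun k => ∑ i, ∑ j, x i * y j * μ i j k

/-- The inner product ⟨α,β⟩ = tr(αβᵀ) on n×n matrices. -/
def innM (α β : Matrix (Fin n) (Fin n) ℝ) : ℝ := (α * βᵀ).trace

/-- ‖β‖² for the trace inner product. -/
def normsqM (β : Matrix (Fin n) (Fin n) ℝ) : ℝ := innM β β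

/-- ‖β‖ for the trace inner product. -/
def normM (β : Matrix (Fin n) (Fin n) ℝ) : ℝ := Real.sqrt (normsqM β)

/-- The inner product on V_n: ⟨μ,λ⟩ = Σ_{ijk} μ_{ij}^k λ_{ij}^k. -/
def innV (μ lam : Vn n) : ℝ := ∑ i, ∑ j, ∑ k, μ i j k * lam i j k

/-- The weight α_{ij}^k = E_kk − E_ii − E_jj. -/
def wt (i j k : Fin n) : Matrix (Fin n) (Fin n) ℝ :=
  Matrix.single k k 1 - Matrix.single i i 1 - Matrix.single j j 1

/-- The GL(n,ℝ)-action on V_n: (g.μ)(X,Y) = g μ(g⁻¹X, g⁻¹Y), in structure constants. -/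
def act (g : GL (Fin n) ℝ) (μ : Vn n) : Vn n := fun i j k =>
  ∑ p, ∑ q, ∑ r, (↑g⁻¹ : Matrix (Fin n) (Fin n) ℝ) p i *
    (↑g⁻¹ : Matrix (Fin n) (Fin n) ℝ) q j * (↑g : Matrix (Fin n) (Fin n) ℝ) k r * μ p q r

/-- The infinitesimal action π(α)μ = αμ(·,·) − μ(α·,·) − μ(·,α·), as an endomorphism of V_n. -/
def piEnd (α : Matrix (Fin n) (Fin n) ℝ) : Module.End ℝ (Vn n) where
  toFun μ := fun i j k =>
    (∑ r, α k r * μ i j r) - (∑ p, α p i * μ p j k) - (∑ q, α q j * μ i q k)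
  map_add' μ ν := by
    funext i j k
    simp [mul_add, Finset.sum_add_distrib]
    ring
  map_smul' a μ := by
    funext i j k
    simp only [Pi.smul_apply, smul_eq_mul, RingHom.id_apply, Finset.mul_sum, mul_sub]
    simp [mul_comm, mul_left_comm]


/-- conjugation gαg⁻¹ of a matrix by an element of GL. -/
def mconj (g : GL (Fin n) ℝ) (α : Matrix (Fin n) (Fin n) ℝ) : Matrix (Fin n) (Fin n) ℝ :=
  (↑g : Matrix (Fin n) (Fin n) ℝ) * α * (↑g⁻¹ : Matrix (Fin n) (Fin n) ℝ)

/-- The set D of diagonalizable matrices, D = ∪_{g∈G} g 𝔱 g⁻¹. -/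
def DiagSet : Set (Matrix (Fin n) (Fin n) ℝ) :=
  {α | ∃ g : GL (Fin n) ℝ, ∃ δ : Matrix (Fin n) (Fin n) ℝ, δ.IsDiag ∧
    α = mconj g δ}

/-- m(μ,α): the smallest eigenvalue of π(α) such that the projection of μ onto the
corresponding eigenspace is nonzero (for diagonalizable α, the projection onto the
eigenspace of r is nonzero iff μ is not in the sum of the other eigenspaces). -/
def mFun (μ : Vn n) (α : Matrix (Fin n) (Fin n) ℝ) : ℝ :=
  sInf {r : ℝ | μ ∉ ⨆ (a : ℝ) (_ : a ≠ r), Module.End.eigenspace (piEnd α) a}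

/-- q(α) = tr(α²). -/
def qF (α : Matrix (Fin n) (Fin n) ℝ) : ℝ := (α * α).trace

/-- Q(μ) = inf{q(α) : α ∈ D, m(μ,α) ≥ 1}. -/
def QF (μ : Vn n) : ℝ := sInf {x : ℝ | ∃ α ∈ DiagSet (n := n), 1 ≤ mFun μ α ∧ x = qF α}

/-- Λ(μ) = {β ∈ D : q(β) = Q(μ), m(μ,β) ≥ 1}. -/
def LambdaF (μ : Vn n) : Set (Matrix (Fin n) (Fin n) ℝ) :=
  {β | β ∈ DiagSet (n := n) ∧ qF β = QF μ ∧ 1 ≤ mFun μ β}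

/-- m(μ,α) for diagonal α: min{⟨α,α_ij^k⟩ : μ_ij^k ≠ 0}. -/
def mT (μ : Vn n) (α : Matrix (Fin n) (Fin n) ℝ) : ℝ :=
  sInf {x : ℝ | ∃ i j k, μ i j k ≠ 0 ∧ x = innM α (wt i j k)}

/-- Q_T(μ) = inf{‖α‖² : α ∈ 𝔱, m(μ,α) ≥ 1}. -/
def QT (μ : Vn n) : ℝ :=
  sInf {x : ℝ | ∃ α : Matrix (Fin n) (Fin n) ℝ, α.IsDiag ∧ 1 ≤ mT μ α ∧ x = normsqM α}

/-- Λ_T(μ) = {β ∈ 𝔱 : ‖β‖² = Q_T(μ), m(μ,β) ≥ 1}. -/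
def LambdaT (μ : Vn n) : Set (Matrix (Fin n) (Fin n) ℝ) :=
  {β | β.IsDiag ∧ normsqM β = QT μ ∧ 1 ≤ mT μ β}

/-- The set of weights {α_ij^k : μ_ij^k ≠ 0}. -/
def wtSet (μ : Vn n) : Set (Matrix (Fin n) (Fin n) ℝ) :=
  {w | ∃ i j k, μ i j k ≠ 0 ∧ w = wt i j k}

/-- β_μ: the minimal convex combination of {α_ij^k : μ_ij^k ≠ 0}, i.e. the unique vector of
minimal norm in the convex hull of this set. -/
def betaMu (μ : Vn n) : Matrix (Fin n) (Fin n) ℝ :=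
  Classical.epsilon fun β => β ∈ convexHull ℝ (wtSet μ) ∧
    ∀ γ ∈ convexHull ℝ (wtSet μ), normsqM β ≤ normsqM γ

/-- The stratum S_β = {μ ∈ V_n∖{0} : β is an element of maximal norm in {β_{g.μ} : g ∈ G}}. -/
def SS (β : Matrix (Fin n) (Fin n) ℝ) : Set (Vn n) :=
  {μ | μ ≠ 0 ∧ IsSkew μ ∧ (∃ g : GL (Fin n) ℝ, betaMu (act g μ) = β) ∧
    ∀ g : GL (Fin n) ℝ, normM (betaMu (act g μ)) ≤ normM β}

/-- W_β = {μ ∈ V_n : ⟨β,α_ij^k⟩ ≥ ‖β‖² whenever μ_ij^k ≠ 0}. -/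
def Wset (β : Matrix (Fin n) (Fin n) ℝ) : Set (Vn n) :=
  {μ | IsSkew μ ∧ ∀ i j k, μ i j k ≠ 0 → normsqM β ≤ innM β (wt i j k)}

/-- Z_β = {μ ∈ V_n : ⟨β,α_ij^k⟩ = ‖β‖² whenever μ_ij^k ≠ 0}. -/
def Zset (β : Matrix (Fin n) (Fin n) ℝ) : Set (Vn n) :=
  {μ | IsSkew μ ∧ ∀ i j k, μ i j k ≠ 0 → innM β (wt i j k) = normsqM β}

/-- Y_β = {μ ∈ W_β : ⟨β,α_ij^k⟩ = ‖β‖² for at least one μ_ij^k ≠ 0}. -/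
def Yset (β : Matrix (Fin n) (Fin n) ℝ) : Set (Vn n) :=
  {μ | μ ∈ Wset β ∧ ∃ i j k, μ i j k ≠ 0 ∧ innM β (wt i j k) = normsqM β}

/-- The closed Weyl chamber: diagonal matrices with nondecreasing diagonal entries. -/
def upperT : Set (Matrix (Fin n) (Fin n) ℝ) :=
  {α | α.IsDiag ∧ Monotone fun i => α i i}

/-- B = {β ∈ closure(𝔱⁺) : S_β ≠ ∅}. -/
def Bset : Set (Matrix (Fin n) (Fin n) ℝ) := {β | β ∈ upperT (n := n) ∧ (SS β).Nonempty}

/-- Der(μ) = {α : π(α)μ = 0}. -/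
def Der (μ : Vn n) : Set (Matrix (Fin n) (Fin n) ℝ) := {α | piEnd α μ = 0}

/-- The subgroup of lower triangular invertible matrices. -/
def lowerTriGL : Set (GL (Fin n) ℝ) :=
  {g | ∀ i j : Fin n, i < j → (↑g : Matrix (Fin n) (Fin n) ℝ) i j = 0}

/-- The parabolic subgroup P_α = B₀ G_α attached to α ∈ closure(𝔱⁺). -/
def Pgroup (α : Matrix (Fin n) (Fin n) ℝ) : Set (GL (Fin n) ℝ) :=
  {p | ∃ b ∈ lowerTriGL (n := n), ∃ h : GL (Fin n) ℝ,
    mconj h α = α ∧ p = b * h}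

/-- The parabolic subgroup P_{α'} = g P_α g⁻¹ attached to a diagonalizable matrix
α' = gαg⁻¹, α ∈ closure(𝔱⁺)  (this is independent of the chosen representation). -/
def PgroupD (α' : Matrix (Fin n) (Fin n) ℝ) : Set (GL (Fin n) ℝ) :=
  {p | ∃ g : GL (Fin n) ℝ, ∃ α ∈ upperT (n := n),
    α' = mconj g α ∧ p ∈ (fun h => g * h * g⁻¹) '' Pgroup α}

/-- membership in O(n). -/
def IsOrth (g : GL (Fin n) ℝ) : Prop := (↑g : Matrix (Fin n) (Fin n) ℝ)ᵀ * (↑g : Matrix (Fin n) (Fin n) ℝ) = 1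

/-- The orthogonal projection p_β : W_β → Z_β (in coordinates: it keeps exactly the
coefficients whose weight pairs to ‖β‖² with β). -/
def pproj (β : Matrix (Fin n) (Fin n) ℝ) (μ : Vn n) : Vn n :=
  fun i j k => if innM β (wt i j k) = normsqM β then μ i j k else 0

/-- H_β: the connected subgroup of G whose Lie algebra 𝔥_β is the orthogonal complement
of β inside 𝔤_β = {α : αβ = βα}, realized as the subgroup generated by exponentials. -/
def Hgrp (β : Matrix (Fin n) (Fin n) ℝ) : Subgroup (GL (Fin n) ℝ) :=
  Subgroup.closure {g | ∃ α : Matrix (Fin n) (Fin n) ℝ,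
    α * β = β * α ∧ innM α β = 0 ∧ (↑g : Matrix (Fin n) (Fin n) ℝ) = NormedSpace.exp α}

/-- μ is H_β-semistable if 0 is not in the closure of the orbit H_β.μ. -/
def Semistable (β : Matrix (Fin n) (Fin n) ℝ) (μ : Vn n) : Prop :=
  (0 : Vn n) ∉ closure ((fun g => act g μ) '' ((Hgrp β : Subgroup (GL (Fin n) ℝ)) : Set (GL (Fin n) ℝ)))

/-- The Jacobi identity for the bilinear map attached to μ. -/
def IsJacobi (μ : Vn n) : Prop :=
  ∀ x y z : Fin n → ℝ,
    brkt μ (brkt μ x y) z + brkt μ (brkt μ y z) x + brkt μ (brkt μ z x) y = 0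

/-- Iterated (left-normed) brackets ad x₁ ∘ … ∘ ad x_m (y). -/
def iterBr (μ : Vn n) : List (Fin n → ℝ) → (Fin n → ℝ) → (Fin n → ℝ)
  | [], y => y
  | x :: l, y => brkt μ x (iterBr μ l y)

/-- Nilpotency: some length of iterated brackets vanishes identically. -/
def IsNilp (μ : Vn n) : Prop :=
  ∃ m : ℕ, ∀ l : List (Fin n → ℝ), l.length = m → ∀ y, iterBr μ l y = 0

/-- N: the set of nilpotent Lie brackets in V_n. -/
def Nset : Set (Vn n) := {μ | IsSkew μ ∧ IsJacobi μ ∧ IsNilp μ}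


namespace Aux
variable {n : ℕ}

/-- transform on the output index. -/
def L1 (A : Matrix (Fin n) (Fin n) ℝ) (μ : Vn n) : Vn n := fun i j k => ∑ r, A k r * μ i j r
/-- transform on the first input index. -/
def L2 (A : Matrix (Fin n) (Fin n) ℝ) (μ : Vn n) : Vn n := fun i j k => ∑ p, A p i * μ p j k
/-- transform on the second input index. -/
def L3 (A : Matrix (Fin n) (Fin n) ℝ) (μ : Vn n) : Vn n := fun i j k => ∑ q, A q j * μ i q k

lemma L1_L1 (A B : Matrix (Fin n) (Fin n) ℝ) (μ : Vn n) : L1 A (L1 B μ) = L1 (A * B) μ := by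
  funext i j k
  simp only [L1, Finset.mul_sum, Matrix.mul_apply, Finset.sum_mul]
  rw [Finset.sum_comm]
  exact Finset.sum_congr rfl fun s _ => Finset.sum_congr rfl fun r _ => by ring

lemma L2_L2 (A B : Matrix (Fin n) (Fin n) ℝ) (μ : Vn n) : L2 A (L2 B μ) = L2 (B * A) μ := by
  funext i j k
  simp only [L2, Finset.mul_sum, Matrix.mul_apply, Finset.sum_mul]
  rw [Finset.sum_comm]
  exact Finset.sum_congr rfl fun s _ => Finset.sum_congr rfl fun r _ => by ring

lemma L3_L3 (A B : Matrix (Fin n) (Fin n) ℝ) (μ : Vn n) : L3 A (L3 B μ) = L3 (B * A) μ := by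
  funext i j k
  simp only [L3, Finset.mul_sum, Matrix.mul_apply, Finset.sum_mul]
  rw [Finset.sum_comm]
  exact Finset.sum_congr rfl fun s _ => Finset.sum_congr rfl fun r _ => by ring

lemma L1_L2 (A B : Matrix (Fin n) (Fin n) ℝ) (μ : Vn n) : L1 A (L2 B μ) = L2 B (L1 A μ) := by
  funext i j k
  simp only [L1, L2, Finset.mul_sum]
  rw [Finset.sum_comm]
  exact Finset.sum_congr rfl fun s _ => Finset.sum_congr rfl fun r _ => by ring

lemma L1_L3 (A B : Matrix (Fin n) (Fin n) ℝ) (μ : Vn n) : L1 A (L3 B μ) = L3 B (L1 A μ) := by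
  funext i j k
  simp only [L1, L3, Finset.mul_sum]
  rw [Finset.sum_comm]
  exact Finset.sum_congr rfl fun s _ => Finset.sum_congr rfl fun r _ => by ring

lemma L2_L3 (A B : Matrix (Fin n) (Fin n) ℝ) (μ : Vn n) : L2 A (L3 B μ) = L3 B (L2 A μ) := by
  funext i j k
  simp only [L2, L3, Finset.mul_sum]
  rw [Finset.sum_comm]
  exact Finset.sum_congr rfl fun s _ => Finset.sum_congr rfl fun r _ => by ring

lemma act_eq (g : GL (Fin n) ℝ) (μ : Vn n) :
    act g μ = L2 (↑g⁻¹) (L3 (↑g⁻¹) (L1 (↑g) μ)) := by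
  funext i j k
  simp only [act, L1, L2, L3, Finset.mul_sum]
  exact Finset.sum_congr rfl fun p _ => Finset.sum_congr rfl fun q _ =>
    Finset.sum_congr rfl fun r _ => by ring

lemma act_mul (g h : GL (Fin n) ℝ) (μ : Vn n) : act (g * h) μ = act g (act h μ) := by
  have h1 : ((↑(g * h) : Matrix (Fin n) (Fin n) ℝ)) = (↑g : Matrix (Fin n) (Fin n) ℝ) * (↑h : Matrix (Fin n) (Fin n) ℝ) := Units.val_mul g h
  have h2 : ((↑(g * h)⁻¹ : Matrix (Fin n) (Fin n) ℝ)) = (↑h⁻¹ : Matrix (Fin n) (Fin n) ℝ) * (↑g⁻¹ : Matrix (Fin n) (Fin n) ℝ) := by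
    rw [_root_.mul_inv_rev]; exact Units.val_mul _ _
  rw [act_eq, act_eq, act_eq, h1, h2, ← L1_L1, ← L2_L2, ← L3_L3]
  rw [L1_L2, L1_L3, L2_L3]

lemma act_one (μ : Vn n) : act 1 μ = μ := by
  funext i j k
  simp [act, Matrix.one_apply]


lemma act_zero (g : GL (Fin n) ℝ) : act g (0 : Vn n) = 0 := by
  funext i j k; simp [act]

lemma act_inv_act (g : GL (Fin n) ℝ) (μ : Vn n) : act g⁻¹ (act g μ) = μ := by
  rw [← act_mul, inv_mul_cancel, act_one]

lemma act_ne_zero {g : GL (Fin n) ℝ} {μ : Vn n} (h : μ ≠ 0) : act g μ ≠ 0 := by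
  intro h0
  apply h
  have := congrArg (act g⁻¹) h0
  rwa [act_inv_act, act_zero] at this

lemma isSkew_act {μ : Vn n} (h : IsSkew μ) (g : GL (Fin n) ℝ) : IsSkew (act g μ) := by
  intro i j k
  simp only [act]
  rw [← Finset.sum_neg_distrib, Finset.sum_comm]
  refine Finset.sum_congr rfl fun p _ => ?_
  rw [← Finset.sum_neg_distrib]
  refine Finset.sum_congr rfl fun q _ => ?_
  rw [← Finset.sum_neg_distrib]
  refine Finset.sum_congr rfl fun r _ => ?_
  rw [h q p r]
  ring

lemma SS_act {β : Matrix (Fin n) (Fin n) ℝ} {μ : Vn n} (hμ : μ ∈ SS β) (h : GL (Fin n) ℝ) :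
    act h μ ∈ SS β := by
  obtain ⟨h0, hsk, ⟨g0, hg0⟩, hmax⟩ := hμ
  refine ⟨act_ne_zero h0, isSkew_act hsk h, ⟨g0 * h⁻¹, ?_⟩, fun g => ?_⟩
  · rw [← act_mul, mul_assoc, inv_mul_cancel, mul_one]; exact hg0
  · rw [← act_mul]; exact hmax (g * h)

end Aux

namespace Aux
variable {n : ℕ}

lemma innM_eq_sum (α β : Matrix (Fin n) (Fin n) ℝ) :
    innM α β = ∑ i, ∑ j, α i j * β i j := by
  simp [innM, Matrix.trace, Matrix.mul_apply, Matrix.diag]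

lemma normsqM_eq_sum (α : Matrix (Fin n) (Fin n) ℝ) :
    normsqM α = ∑ i, ∑ j, α i j * α i j := by
  rw [normsqM, innM_eq_sum]

lemma normsqM_nonneg (α : Matrix (Fin n) (Fin n) ℝ) : 0 ≤ normsqM α := by
  rw [normsqM_eq_sum]
  exact Finset.sum_nonneg fun i _ => Finset.sum_nonneg fun j _ => mul_self_nonneg _

lemma normsqM_comb (a b : ℝ) (x y : Matrix (Fin n) (Fin n) ℝ) :
    normsqM (a • x + b • y) =
      a^2 * normsqM x + 2*a*b* innM x y + b^2 * normsqM y := by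
  simp only [normsqM_eq_sum, innM_eq_sum, Matrix.add_apply, Matrix.smul_apply, smul_eq_mul,
    Finset.mul_sum, ← Finset.sum_add_distrib]
  exact Finset.sum_congr rfl fun i _ => Finset.sum_congr rfl fun j _ => by ring

lemma continuous_normsqM : Continuous fun γ : Matrix (Fin n) (Fin n) ℝ => normsqM γ := by
  have h : (fun γ : Matrix (Fin n) (Fin n) ℝ => normsqM γ) =
      fun γ => ∑ i, ∑ j, γ i j * γ i j := funext normsqM_eq_sum
  rw [h]
  fun_prop

lemma min_norm_inner {s : Set (Matrix (Fin n) (Fin n) ℝ)} {β₀ : Matrix (Fin n) (Fin n) ℝ}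
    (hβ : β₀ ∈ convexHull ℝ s) (hmin : ∀ γ ∈ convexHull ℝ s, normsqM β₀ ≤ normsqM γ)
    {w : Matrix (Fin n) (Fin n) ℝ} (hw : w ∈ s) : normsqM β₀ ≤ innM β₀ w := by
  by_contra hlt
  push_neg at hlt
  set B := normsqM β₀ with hB
  set c := innM β₀ w with hc
  set D := normsqM w with hD
  have hK : 0 ≤ B - 2*c + D := by
    have h1 : normsqM ((1:ℝ) • β₀ + (-1:ℝ) • w) = B - 2*c + D := by
      rw [normsqM_comb]; ring
    have := normsqM_nonneg ((1:ℝ) • β₀ + (-1:ℝ) • w)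
    linarith
  set K := B - 2*c + D with hKdef
  have hε : 0 < B - c := by linarith
  set t : ℝ := min 1 ((B - c)/(K+1)) with ht
  have ht0 : 0 < t := lt_min one_pos (div_pos hε (by linarith))
  have ht1 : t ≤ 1 := min_le_left _ _
  have htK : t * (K + 1) ≤ B - c := by
    rw [← le_div_iff₀ (by linarith)]
    exact min_le_right _ _
  have hmem : (1-t) • β₀ + t • w ∈ convexHull ℝ s :=
    (convex_convexHull ℝ s) hβ (subset_convexHull ℝ s hw) (by linarith) (le_of_lt ht0) (by ring)
  have hineq := hmin _ hmem
  rw [normsqM_comb] at hineq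
  nlinarith [mul_pos ht0 hε, mul_nonneg (le_of_lt ht0) hK, mul_le_mul_of_nonneg_left htK (le_of_lt ht0), sq_nonneg t]

lemma wtSet_finite (μ : Vn n) : (wtSet μ).Finite := by
  apply Set.Finite.subset (Set.finite_range fun t : Fin n × Fin n × Fin n => wt t.1 t.2.1 t.2.2)
  rintro w ⟨i, j, k, -, rfl⟩
  exact ⟨(i, j, k), rfl⟩

lemma exists_ne_zero {μ : Vn n} (h : μ ≠ 0) : ∃ i j k, μ i j k ≠ 0 := by
  by_contra hc
  push_neg at hc
  exact h (by funext i j k; exact hc i j k)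

lemma betaMu_spec {μ : Vn n} (h : μ ≠ 0) :
    betaMu μ ∈ convexHull ℝ (wtSet μ) ∧
      ∀ γ ∈ convexHull ℝ (wtSet μ), normsqM (betaMu μ) ≤ normsqM γ := by
  apply Classical.epsilon_spec (p := fun β => β ∈ convexHull ℝ (wtSet μ) ∧
    ∀ γ ∈ convexHull ℝ (wtSet μ), normsqM β ≤ normsqM γ)
  obtain ⟨i, j, k, hijk⟩ := exists_ne_zero h
  have hne : (convexHull ℝ (wtSet μ)).Nonempty :=
    ⟨wt i j k, subset_convexHull ℝ _ ⟨i, j, k, hijk, rfl⟩⟩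
  obtain ⟨x, hx, hxmin⟩ := ((wtSet_finite μ).isCompact_convexHull ℝ).exists_isMinOn hne
    continuous_normsqM.continuousOn
  exact ⟨x, hx, hxmin⟩

/-- If `betaMu ν = β` and `ν ≠ 0` and skew, then `ν ∈ Wset β`. -/
lemma mem_Wset_of_betaMu {ν : Vn n} {β : Matrix (Fin n) (Fin n) ℝ} (h0 : ν ≠ 0)
    (hsk : IsSkew ν) (hβ : betaMu ν = β) : ν ∈ Wset β := by
  refine ⟨hsk, fun i j k hijk => ?_⟩
  obtain ⟨hmem, hmin⟩ := betaMu_spec h0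
  rw [hβ] at hmem hmin
  exact min_norm_inner hmem hmin ⟨i, j, k, hijk, rfl⟩

end Aux

namespace Aux
variable {n : ℕ}

lemma dotProduct_self_pos {v : Fin n → ℝ} (hv : v ≠ 0) : 0 < v ⬝ᵥ v := by
  have h1 : (0:ℝ) ≤ v ⬝ᵥ v := by
    rw [dotProduct]
    exact Finset.sum_nonneg fun i _ => mul_self_nonneg _
  have h2 : v ⬝ᵥ v ≠ 0 := fun h => hv (dotProduct_self_eq_zero.mp h)
  exact lt_of_le_of_ne h1 (Ne.symm h2)

lemma posdef_transpose_mul_self {A : Matrix (Fin n) (Fin n) ℝ}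
    (hA : Function.Injective A.mulVec) : (Aᵀ * A).PosDef := by
  rw [Matrix.posDef_iff_dotProduct_mulVec]
  constructor
  · ext i j
    simp [Matrix.conjTranspose_apply, Matrix.mul_apply, mul_comm]
  · intro x hx
    have hy : A.mulVec x ≠ 0 := fun h => hx (hA (h.trans (A.mulVec_zero).symm))
    rw [star_trivial, ← Matrix.mulVec_mulVec, Matrix.dotProduct_mulVec, Matrix.vecMul_transpose]
    exact dotProduct_self_pos hy

lemma posdef_conj {S T : Matrix (Fin n) (Fin n) ℝ} (hS : S.PosDef)
    (hT : Function.Injective (Tᵀ).mulVec) : (T * S * Tᵀ).PosDef := by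
  have hSt : Sᵀ = S := by
    have := hS.1
    rwa [Matrix.IsHermitian, Matrix.conjTranspose_eq_transpose_of_trivial] at this
  rw [Matrix.posDef_iff_dotProduct_mulVec]
  constructor
  · rw [Matrix.IsHermitian, Matrix.conjTranspose_eq_transpose_of_trivial,
      Matrix.transpose_mul, Matrix.transpose_mul, Matrix.transpose_transpose, hSt,
      Matrix.mul_assoc]
  · intro x hx
    have hy : Tᵀ.mulVec x ≠ 0 := fun h => hx (hT (h.trans ((Tᵀ).mulVec_zero).symm))
    rw [star_trivial, ← Matrix.mulVec_mulVec, ← Matrix.mulVec_mulVec,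
      Matrix.dotProduct_mulVec]
    rw [show x ᵥ* T = Tᵀ *ᵥ x from (Matrix.mulVec_transpose T x).symm]
    exact (Matrix.posDef_iff_dotProduct_mulVec.mp hS).2 hy

/-- QL decomposition: every `g ∈ GL` is `k * b` with `k` orthogonal and `b` lower triangular. -/
lemma exists_QL (g : GL (Fin n) ℝ) : ∃ k b : GL (Fin n) ℝ,
    IsOrth k ∧ b ∈ lowerTriGL ∧ g = k * b := by
  set A : Matrix (Fin n) (Fin n) ℝ := ↑g with hA
  haveI : Invertible A := g.invertible
  set e : Equiv.Perm (Fin n) := Fin.revPerm with he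
  -- B has the columns of A permuted
  set B : Matrix (Fin n) (Fin n) ℝ := A.submatrix id ⇑e with hB
  have hBinj : Function.Injective B.mulVec := by
    intro x y hxy
    have h1 : ∀ z, B.mulVec z = A.mulVec (z ∘ ⇑e.symm) := by
      intro z
      funext i
      simp [hB, Matrix.mulVec, dotProduct, Matrix.submatrix_apply]
      exact Fintype.sum_equiv e _ _ fun j => by simp [he]
    rw [h1, h1] at hxy
    have := A.mulVec_injective_of_invertible hxy
    funext i
    have := congrFun this (e i)
    simpa using this
  have hS' : (Bᵀ * B).PosDef := posdef_transpose_mul_self hBinj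
  -- Bᵀ*B = S.submatrix e e where S = AᵀA
  have hSsub : Bᵀ * B = (Aᵀ * A).submatrix ⇑e ⇑e := by
    ext i j
    simp [Matrix.mul_apply, hB, Matrix.submatrix_apply]
  haveI hwf : WellFoundedLT (Fin n) := inferInstance
  set S' : Matrix (Fin n) (Fin n) ℝ := Bᵀ * B with hS'def
  set T : Matrix (Fin n) (Fin n) ℝ := LDL.lowerInv hS' with hT
  set d : Fin n → ℝ := LDL.diagEntries hS' with hd_def
  have hdetT : IsUnit T.det := by
    obtain ⟨TI, hTI1, hTI2⟩ := LDL.invertibleLowerInv hS'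
    have h1 : TI * T = 1 := by
      ext i j
      have h2 := congrFun (congrFun hTI1 i) j
      rw [hT, h2]
    haveI := invertibleOfLeftInverse T TI h1
    exact Matrix.isUnit_det_of_invertible T
  have hTtInj : Function.Injective (Tᵀ).mulVec := by
    rw [Matrix.mulVec_injective_iff_isUnit, Matrix.isUnit_iff_isUnit_det, Matrix.det_transpose]
    exact hdetT
  have hDiag2 : T * S' * Tᵀ = Matrix.diagonal d := by
    have h := LDL.diag_eq_lowerInv_conj hS'
    rw [Matrix.conjTranspose_eq_transpose_of_trivial] at h
    unfold LDL.diag at h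
    rw [hT, ← h]
  have hDpos : (Matrix.diagonal d).PosDef := by
    rw [← hDiag2]
    exact posdef_conj hS' hTtInj
  have hd : ∀ i, 0 < d i := Matrix.posDef_diagonal_iff.mp hDpos
  set E : Matrix (Fin n) (Fin n) ℝ := Matrix.diagonal (fun i => (Real.sqrt (d i))⁻¹) with hE
  set C : Matrix (Fin n) (Fin n) ℝ := E * T with hCdef
  have hC : C * S' * Cᵀ = 1 := by
    have hCt : Cᵀ = Tᵀ * E := by
      rw [hCdef, Matrix.transpose_mul, hE, Matrix.diagonal_transpose]
    have h6 : E * (T * S' * Tᵀ) * E = 1 := by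
      rw [hDiag2, hE, Matrix.diagonal_mul_diagonal, Matrix.diagonal_mul_diagonal]
      have h7 : (fun i => (Real.sqrt (d i))⁻¹ * (d i) * (Real.sqrt (d i))⁻¹) = fun _ => (1:ℝ) := by
        funext i
        have hdi := hd i
        have hs : Real.sqrt (d i) * Real.sqrt (d i) = d i := Real.mul_self_sqrt hdi.le
        have hsne : Real.sqrt (d i) ≠ 0 := (Real.sqrt_pos.mpr hdi).ne'
        field_simp
        rw [Real.sq_sqrt hdi.le]
      rw [h7, Matrix.diagonal_one]
    rw [hCdef, hCt]
    simp only [← Matrix.mul_assoc] at h6 ⊢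
    exact h6
  set C₂ : Matrix (Fin n) (Fin n) ℝ := C.submatrix ⇑e ⇑e with hC₂def
  have hee : ⇑e ∘ ⇑e = id := by
    funext i; simp [he]
  have hC₂ : C₂ * (Aᵀ * A) * C₂ᵀ = 1 := by
    have h1 : Aᵀ * A = S'.submatrix ⇑e ⇑e := by
      rw [hSsub, Matrix.submatrix_submatrix, hee, Matrix.submatrix_id_id]
    rw [h1, hC₂def, Matrix.transpose_submatrix, Matrix.submatrix_mul_equiv (e₂ := e),
      Matrix.submatrix_mul_equiv (e₂ := e), hC, Matrix.submatrix_one_equiv]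
  have hC₂tri : ∀ i j : Fin n, j < i → C₂ i j = 0 := by
    intro i j hji
    have h1 : C₂ i j = (Real.sqrt (d (e i)))⁻¹ * T (e i) (e j) := by
      show C (e i) (e j) = _
      rw [hCdef, hE, Matrix.diagonal_mul]
    have h2 : e i < e j := by
      simp only [he, Fin.revPerm_apply]
      exact Fin.rev_lt_rev.mpr hji
    rw [h1, hT, LDL.lowerInv_triangular hS' h2, mul_zero]
  haveI hC₂inv : Invertible C₂ :=
    invertibleOfRightInverse C₂ ((Aᵀ * A) * C₂ᵀ)
      (by rw [← Matrix.mul_assoc]; exact hC₂)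
  have hC₂block : C₂.BlockTriangular id := fun i j h => hC₂tri i j h
  have hXblock : (C₂⁻¹).BlockTriangular id :=
    Matrix.blockTriangular_inv_of_blockTriangular hC₂block
  haveI : Invertible (C₂ᵀ) := Matrix.invertibleTranspose C₂
  have hXblock : (C₂⁻¹).BlockTriangular id :=
    Matrix.blockTriangular_inv_of_blockTriangular hC₂block
  have hSX : Aᵀ * A = C₂⁻¹ * (C₂⁻¹)ᵀ := by
    have h1 : C₂ * ((Aᵀ * A) * C₂ᵀ) = 1 := by rw [← Matrix.mul_assoc]; exact hC₂
    have h2 : C₂⁻¹ = Aᵀ * A * C₂ᵀ := Matrix.inv_eq_right_inv h1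
    rw [Matrix.transpose_nonsing_inv, h2, Matrix.mul_assoc,
      Matrix.mul_nonsing_inv _ (Matrix.isUnit_det_of_invertible C₂ᵀ), Matrix.mul_one]
  haveI hXinv : Invertible (C₂⁻¹) :=
    invertibleOfRightInverse _ C₂ (Matrix.inv_mul_of_invertible C₂)
  haveI hbinv : Invertible ((C₂⁻¹)ᵀ) := Matrix.invertibleTranspose _
  set bGL : GL (Fin n) ℝ :=
    ⟨(C₂⁻¹)ᵀ, ⅟((C₂⁻¹)ᵀ), mul_invOf_self _, invOf_mul_self _⟩ with hbGL
  refine ⟨g * bGL⁻¹, bGL, ?_, ?_, ?_⟩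
  · show ((↑(g * bGL⁻¹) : Matrix (Fin n) (Fin n) ℝ))ᵀ * _ = 1
    have hcoe : ((↑(g * bGL⁻¹) : Matrix (Fin n) (Fin n) ℝ)) = A * ((C₂⁻¹)ᵀ)⁻¹ := by
      rw [Units.val_mul]
      congr 1
      show ((↑bGL⁻¹ : Matrix (Fin n) (Fin n) ℝ)) = ((C₂⁻¹)ᵀ)⁻¹
      rw [← invOf_eq_nonsing_inv]
      rfl
    have hPt : ((((C₂⁻¹)ᵀ)⁻¹))ᵀ = (C₂⁻¹)⁻¹ := by
      rw [← Matrix.transpose_nonsing_inv, Matrix.transpose_transpose]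
    have key : (C₂⁻¹)⁻¹ * (Aᵀ * A) * ((C₂⁻¹)ᵀ)⁻¹ = 1 := by
      rw [hSX, ← Matrix.mul_assoc,
        Matrix.nonsing_inv_mul _ (Matrix.isUnit_det_of_invertible (C₂⁻¹)),
        Matrix.one_mul, Matrix.mul_nonsing_inv _ (Matrix.isUnit_det_of_invertible ((C₂⁻¹)ᵀ))]
    rw [hcoe, Matrix.transpose_mul, hPt]
    simp only [← Matrix.mul_assoc] at key ⊢
    exact key
  · intro i j hij
    show (C₂⁻¹)ᵀ i j = 0
    exact hXblock hij
  · rw [mul_assoc, inv_mul_cancel, mul_one]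

end Aux

namespace Aux
variable {n : ℕ}

lemma innM_wt (α : Matrix (Fin n) (Fin n) ℝ) (i j k : Fin n) :
    innM α (wt i j k) = α k k - α i i - α j j := by
  simp [innM_eq_sum, wt, Matrix.sub_apply, Matrix.single, mul_sub,
    Finset.sum_sub_distrib, mul_ite, mul_one, mul_zero, ite_and, Finset.sum_ite_eq,
    Finset.sum_ite_eq']

lemma lower_inv_entries {b : GL (Fin n) ℝ} (hb : b ∈ lowerTriGL) :
    ∀ i j : Fin n, i < j → (↑b⁻¹ : Matrix (Fin n) (Fin n) ℝ) i j = 0 := by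
  set M : Matrix (Fin n) (Fin n) ℝ := ↑b with hM
  haveI : Invertible M := b.invertible
  haveI : Invertible Mᵀ := Matrix.invertibleTranspose M
  have h1 : Mᵀ.BlockTriangular id := fun i j (h : (j:Fin n) < i) => hb j i h
  have h2 : (Mᵀ)⁻¹.BlockTriangular id :=
    Matrix.blockTriangular_inv_of_blockTriangular h1
  intro i j hij
  have hcoe : (↑b⁻¹ : Matrix (Fin n) (Fin n) ℝ) = M⁻¹ := Matrix.coe_units_inv b
  have h3 : (M⁻¹)ᵀ j i = 0 := by
    rw [Matrix.transpose_nonsing_inv]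
    exact h2 hij
  rw [hcoe]
  exact h3

lemma act_support {b : GL (Fin n) ℝ} (hb : b ∈ lowerTriGL) (ν : Vn n) {i j k : Fin n}
    (h : act b ν i j k ≠ 0) :
    ∃ p q r, ν p q r ≠ 0 ∧ i ≤ p ∧ j ≤ q ∧ r ≤ k := by
  obtain ⟨p, -, hp⟩ := Finset.exists_ne_zero_of_sum_ne_zero h
  obtain ⟨q, -, hq⟩ := Finset.exists_ne_zero_of_sum_ne_zero hp
  obtain ⟨r, -, hr⟩ := Finset.exists_ne_zero_of_sum_ne_zero hq
  rcases mul_ne_zero_iff.mp hr with ⟨h123, h4⟩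
  rcases mul_ne_zero_iff.mp h123 with ⟨h12, h3⟩
  rcases mul_ne_zero_iff.mp h12 with ⟨h1, h2⟩
  refine ⟨p, q, r, h4, ?_, ?_, ?_⟩
  · by_contra hc
    push_neg at hc
    exact h1 (lower_inv_entries hb p i hc)
  · by_contra hc
    push_neg at hc
    exact h2 (lower_inv_entries hb q j hc)
  · by_contra hc
    push_neg at hc
    exact h3 (hb k r hc)

lemma mem_Wset_act_lower {β : Matrix (Fin n) (Fin n) ℝ}
    (hmono : Monotone fun i => β i i) {ν : Vn n} (hν : ν ∈ Wset β) {b : GL (Fin n) ℝ}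
    (hb : b ∈ lowerTriGL) : act b ν ∈ Wset β := by
  refine ⟨isSkew_act hν.1 b, fun i j k h => ?_⟩
  obtain ⟨p, q, r, hν0, hip, hjq, hrk⟩ := act_support hb ν h
  have h1 := hν.2 p q r hν0
  rw [innM_wt] at h1 ⊢
  have e1 : β i i ≤ β p p := hmono hip
  have e2 : β j j ≤ β q q := hmono hjq
  have e3 : β r r ≤ β k k := hmono hrk
  linarith

end Aux


open Aux in
/-- **Theorem 2.10 (v).** S_β = O(n).(S_β ∩ W_β). -/
theorem SS_eq_orth_orbit {n : ℕ} (β : Matrix (Fin n) (Fin n) ℝ) (hβ : β ∈ Bset (n := n)) :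
    SS β = {μ | ∃ g : GL (Fin n) ℝ, IsOrth g ∧ ∃ lam ∈ SS β ∩ Wset β, μ = act g lam} := by
  have hmono : Monotone fun i => β i i := hβ.1.2
  ext μ
  simp only [Set.mem_setOf_eq]
  constructor
  · intro hμ
    obtain ⟨h0, hsk, ⟨g0, hg0⟩, -⟩ := id hμ
    obtain ⟨k, b, hk, hb, hkb⟩ := exists_QL g0⁻¹
    have hν0 : act g0 μ ≠ 0 := act_ne_zero h0
    have hνW : act g0 μ ∈ Wset β := mem_Wset_of_betaMu hν0 (isSkew_act hsk g0) hg0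
    refine ⟨k, hk, act b (act g0 μ), ⟨SS_act (SS_act hμ g0) b, mem_Wset_act_lower hmono hνW hb⟩, ?_⟩
    rw [← act_mul, ← hkb, act_inv_act]
  · rintro ⟨g, hg, lam, ⟨hlamS, hlamW⟩, rfl⟩
    exact SS_act hlamS g

end
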